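/- Let A be a unique factorization domain and let (x₀, x₁, x₂) ∈ A³ be a nonzero primitive triple (gcd(x₀, x₁, x₂) = 1) satisfying x₀x₂ − x₁² = 0. Then there exist a unit u of A and elements m, n ∈ A such that (x₀, x₁, x₂) = (u·m², u·m·n, u·n²). -/
import Mathlib

/-- **Primitive solutions of `x₀x₂ = x₁²` in a UFD.** If `(x₀, x₁, x₂) ∈ A³` is a
nonzero primitive triple (every common divisor of the coordinates is a unit) in a
unique factorization domain `A` with `x₀x₂ - x₁² = 0`, then there are a unit `u` of
`A` and `m, n ∈ A` with `(x₀, x₁, x₂) = (u·m², u·m·n, u·n²)`. -/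
theorem primitive_triple_of_det2_eq_zero
    {A : Type*} [CommRing A] [IsDomain A] [UniqueFactorizationMonoid A]
    (x₀ x₁ x₂ : A) (hne : ¬(x₀ = 0 ∧ x₁ = 0 ∧ x₂ = 0))
    (hprim : ∀ d : A, d ∣ x₀ → d ∣ x₁ → d ∣ x₂ → IsUnit d)
    (h : x₀ * x₂ - x₁ ^ 2 = 0) :
    ∃ u m n : A, IsUnit u ∧ x₀ = u * m ^ 2 ∧ x₁ = u * m * n ∧ x₂ = u * n ^ 2 := by
  rw [sub_eq_zero] at h
  classical
  letI : GCDMonoid A := UniqueFactorizationMonoid.toGCDMonoid A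
  by_cases h0 : x₀ = 0
  · -- then x₁ = 0, x₂ is a unit
    have h1 : x₁ = 0 := by
      have : x₁ ^ 2 = 0 := by rw [← h, h0, zero_mul]
      exact pow_eq_zero_iff (n := 2) (by norm_num) |>.mp this
    have hu : IsUnit x₂ := hprim x₂ (h0 ▸ dvd_zero _) (h1 ▸ dvd_zero _) dvd_rfl
    exact ⟨x₂, 0, 1, hu, by simp [h0], by simp [h1], by simp⟩
  by_cases h2 : x₂ = 0
  · have h1 : x₁ = 0 := by
      have : x₁ ^ 2 = 0 := by rw [← h, h2, mul_zero]
      exact pow_eq_zero_iff (n := 2) (by norm_num) |>.mp this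
    have hu : IsUnit x₀ := hprim x₀ dvd_rfl (h1 ▸ dvd_zero _) (h2 ▸ dvd_zero _)
    exact ⟨x₀, 1, 0, hu, by simp, by simp [h1], by simp [h2]⟩
  -- main case: x₀, x₂ ≠ 0
  have h1 : x₁ ≠ 0 := by
    intro h1
    rw [h1, zero_pow (by norm_num)] at h
    rcases mul_eq_zero.mp h with h' | h' <;> [exact h0 h'; exact h2 h']
  have hcop : IsUnit (gcd x₀ x₂) := by
    by_contra hg
    have hgne : gcd x₀ x₂ ≠ 0 := fun hz => h0 ((gcd_eq_zero_iff _ _).mp hz).1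
    obtain ⟨p, hpg⟩ := UniqueFactorizationMonoid.exists_mem_factors hgne hg
    have hpprime : Prime p := UniqueFactorizationMonoid.prime_of_factor p hpg
    have hpdvd : p ∣ gcd x₀ x₂ :=
      (UniqueFactorizationMonoid.dvd_of_mem_factors hpg)
    have hp0 : p ∣ x₀ := hpdvd.trans (gcd_dvd_left _ _)
    have hp2 : p ∣ x₂ := hpdvd.trans (gcd_dvd_right _ _)
    have hp1 : p ∣ x₁ := hpprime.dvd_of_dvd_pow (n := 2) (h ▸ hp0.mul_right _)
    exact hpprime.not_unit (hprim p hp0 hp1 hp2)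
  obtain ⟨m, ⟨u, hu⟩⟩ := exists_associated_pow_of_mul_eq_pow hcop h
  -- hu : m ^ 2 * u = x₀
  have hcop' : IsUnit (gcd x₂ x₀) :=
    isUnit_of_dvd_unit (dvd_gcd (gcd_dvd_right _ _) (gcd_dvd_left _ _)) hcop
  obtain ⟨n, ⟨v, hv⟩⟩ := exists_associated_pow_of_mul_eq_pow hcop'
    (by rw [mul_comm]; exact h)
  -- hv : n ^ 2 * v = x₂
  have hm : m ≠ 0 := by rintro rfl; apply h0; simpa using hu.symm
  have hn : n ≠ 0 := by rintro rfl; apply h2; simpa using hv.symm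
  -- m * n ∣ x₁
  have hmdvd : m ∣ x₁ := by
    rw [← IsIntegrallyClosed.pow_dvd_pow_iff (two_ne_zero)]
    exact ⟨(u : A) * x₂, by rw [← h, ← hu]; ring⟩
  have hndvd : n ∣ x₁ := by
    rw [← IsIntegrallyClosed.pow_dvd_pow_iff (two_ne_zero)]
    exact ⟨(v : A) * x₀, by rw [← h, ← hv]; ring⟩
  have hmn : m * n ∣ x₁ := by
    -- m and n are coprime since x₀ and x₂ are
    have : IsUnit (gcd m n) := by
      by_contra hg
      have hgne : gcd m n ≠ 0 := fun hz => hm ((gcd_eq_zero_iff _ _).mp hz).1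
      obtain ⟨p, hpg⟩ := UniqueFactorizationMonoid.exists_mem_factors hgne hg
      have hpprime : Prime p := UniqueFactorizationMonoid.prime_of_factor p hpg
      have hpdvd : p ∣ gcd m n := UniqueFactorizationMonoid.dvd_of_mem_factors hpg
      have hpm : p ∣ m := hpdvd.trans (gcd_dvd_left _ _)
      have hpn : p ∣ n := hpdvd.trans (gcd_dvd_right _ _)
      have hpx0 : p ∣ x₀ := hpm.trans ⟨m * u, by rw [← hu]; ring⟩
      have hpx2 : p ∣ x₂ := hpn.trans ⟨n * v, by rw [← hv]; ring⟩
      have : p ∣ gcd x₀ x₂ := dvd_gcd hpx0 hpx2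
      exact hpprime.not_unit (isUnit_of_dvd_unit this hcop)
    exact (gcd_isUnit_iff_isRelPrime.mp this).mul_dvd hmdvd hndvd
  obtain ⟨t, ht⟩ := hmn
  -- t^2 = u * v (up to arrangement): (m n t)^2 = x₁^2 = x₀ x₂ = m² u n² v
  have key : t ^ 2 = (u : A) * v := by
    have h2' : m ^ 2 * (u : A) * (n ^ 2 * (v : A)) = (m * n * t) ^ 2 := by
      rw [hu, hv, ← ht]; exact h
    refine mul_left_cancel₀ (pow_ne_zero 2 (mul_ne_zero hm hn)) ?_
    linear_combination -h2'
  have htunit : IsUnit t := by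
    have h' : IsUnit (t ^ 2) := key ▸ (u.isUnit.mul v.isUnit)
    rw [pow_two] at h'
    exact isUnit_of_mul_isUnit_left h'
  have huu : (u : A) * ((u⁻¹ : Aˣ) : A) = 1 := u.mul_inv
  refine ⟨u, m, n * t * (u⁻¹ : Aˣ), u.isUnit, hu.symm.trans (by ring), ?_, ?_⟩
  · calc x₁ = m * n * t := ht
      _ = m * n * t * ((u : A) * ((u⁻¹ : Aˣ) : A)) := by rw [huu, mul_one]
      _ = (u : A) * m * (n * t * ((u⁻¹ : Aˣ) : A)) := by ring
  · rw [← hv]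
    calc n ^ 2 * (v : A)
        = n ^ 2 * (v : A) * ((u : A) * ((u⁻¹ : Aˣ) : A)) * ((u : A) * ((u⁻¹ : Aˣ) : A)) := by
          rw [huu]; ring
      _ = ((u : A) * (v : A)) * (n ^ 2 * ((u⁻¹ : Aˣ) : A) ^ 2 * (u : A)) := by ring
      _ = t ^ 2 * (n ^ 2 * ((u⁻¹ : Aˣ) : A) ^ 2 * (u : A)) := by rw [key]
      _ = (u : A) * (n * t * ((u⁻¹ : Aˣ) : A)) ^ 2 := by ring
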